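/- Let m ≥ 2, 0 < γ ≤ m^{−3/2}/16, and ℓ = ⌊1/√(2γ√m)⌋. In the lower-bound construction with classes C₁, C₂ partitioning X, the partition has strong convex hull margin γ: d(conv(C₁), conv(C₂)) ≥ γ · diam(X), where d and diam are Euclidean. -/

import Mathlib

/-!
The linear functional `v = e_m - ∑ᵢ ℓᵢ eᵢ` takes the value `j - ℓᵢ` at `x_i^j`, so it is `≤ 0` on
`C₁` and `≥ 1` on `C₂`, hence on their convex hulls; by Cauchy–Schwarz the two hulls are at
distance at least `1 / ‖v‖ ≥ 1 / (ℓ √m)`. On the other hand `diam X ≤ 2ℓ`, and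
`ℓ ≤ 1 / √(2γ√m)` says exactly that `γ · 2ℓ ≤ 1 / (ℓ √m)`.
-/

/-- The point `x_i^j = e_i + j • e_m` of the lower-bound construction. -/
noncomputable def xpt (m i j : ℕ) : EuclideanSpace ℝ (Fin m) :=
  WithLp.toLp 2 fun c => (if (c : ℕ) = i then 1 else 0) + (if (c : ℕ) = m - 1 then (j : ℝ) else 0)

open scoped InnerProductSpace

theorem le_norm_mul_dist_of_separated {E : Type*} [NormedAddCommGroup E] [InnerProductSpace ℝ E]
    {A B : Set E} {v a b : E} {c δ : ℝ} (hA : ∀ x ∈ A, ⟪v, x⟫_ℝ ≤ c)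
    (hB : ∀ y ∈ B, c + δ ≤ ⟪v, y⟫_ℝ) (ha : a ∈ convexHull ℝ A) (hb : b ∈ convexHull ℝ B) :
    δ ≤ ‖v‖ * dist a b := by
  have hlin : IsLinearMap ℝ (fun x : E => ⟪v, x⟫_ℝ) := (innerₛₗ ℝ v).isLinear
  have ha' : ⟪v, a⟫_ℝ ≤ c := convexHull_min hA (convex_halfSpace_le hlin c) ha
  have hb' : c + δ ≤ ⟪v, b⟫_ℝ := convexHull_min hB (convex_halfSpace_ge hlin _) hb
  calc δ ≤ ⟪v, b - a⟫_ℝ := by rw [inner_sub_right]; linarith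
    _ ≤ ‖v‖ * ‖b - a‖ := real_inner_le_norm _ _
    _ = ‖v‖ * dist a b := by rw [dist_comm, dist_eq_norm]

theorem EuclideanSpace.norm_le_sqrt_card_mul {ι : Type*} [Fintype ι] (x : EuclideanSpace ℝ ι)
    {C : ℝ} (hC : 0 ≤ C) (hx : ∀ i, |x i| ≤ C) : ‖x‖ ≤ √(Fintype.card ι) * C := by
  rw [EuclideanSpace.norm_eq]
  calc √(∑ i, ‖x i‖ ^ 2) ≤ √(∑ _i : ι, C ^ 2) := by
        gcongr with i
        exact (Real.norm_eq_abs _).trans_le (hx i)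
    _ = √(Fintype.card ι) * C := by simp [Real.sqrt_mul, Real.sqrt_sq hC]

theorem sq_mul_le_one_of_le_one_div_sqrt {x t : ℝ} (hx : 0 < x) (h : x ≤ 1 / √t) :
    0 < t ∧ x ^ 2 * t ≤ 1 := by
  have hs : 0 < √t := by
    by_contra! h0
    rw [le_antisymm h0 (Real.sqrt_nonneg t), div_zero] at h
    linarith
  have ht : 0 < t := Real.sqrt_pos.1 hs
  refine ⟨ht, ?_⟩
  rw [← Real.sq_sqrt ht.le, ← mul_pow]
  exact pow_le_one₀ (by positivity) ((le_div_iff₀ hs).1 h)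

theorem xpt_eq {m i : ℕ} (hi : i < m) (j : ℕ) :
    xpt m i j = EuclideanSpace.single (⟨i, hi⟩ : Fin m) (1 : ℝ)
      + (j : ℝ) • EuclideanSpace.single (⟨m - 1, by omega⟩ : Fin m) (1 : ℝ) := by
  ext c
  simp only [xpt, PiLp.toLp_apply, PiLp.add_apply, PiLp.smul_apply, PiLp.single_apply,
    smul_eq_mul, mul_ite, mul_one, mul_zero, Fin.ext_iff]

theorem dist_xpt_le {m i i' : ℕ} (hi : i < m) (hi' : i' < m) (j j' : ℕ) :
    dist (xpt m i j) (xpt m i' j') ≤ 2 + |(j : ℝ) - j'| := by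
  set e : Fin m → EuclideanSpace ℝ (Fin m) := fun k => EuclideanSpace.single k 1 with he
  have hnorm : ∀ k, ‖e k‖ = 1 := fun k => by simp [he]
  rw [dist_eq_norm, xpt_eq hi, xpt_eq hi']
  calc _ = ‖(e ⟨i, hi⟩ - e ⟨i', hi'⟩) + ((j : ℝ) - j') • e ⟨m - 1, by omega⟩‖ := by
        congr 1; module
    _ ≤ ‖e ⟨i, hi⟩‖ + ‖e ⟨i', hi'⟩‖ + |(j : ℝ) - j'| * ‖e ⟨m - 1, by omega⟩‖ := by
        grw [norm_add_le, norm_sub_le, norm_smul, Real.norm_eq_abs]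
    _ = 2 + |(j : ℝ) - j'| := by rw [hnorm, hnorm, hnorm]; ring

theorem diam_xpt_le {m ℓ : ℕ} (hℓ : 1 ≤ ℓ) :
    Metric.diam {z : EuclideanSpace ℝ (Fin m) |
      ∃ i j : ℕ, i < m - 1 ∧ 1 ≤ j ∧ j ≤ ℓ ∧ z = xpt m i j} ≤ 2 * ℓ := by
  refine Metric.diam_le_of_forall_dist_le (by positivity) ?_
  rintro _ ⟨i, j, hi, hj1, hjℓ, rfl⟩ _ ⟨i', j', hi', hj1', hjℓ', rfl⟩
  have hℓR : (1 : ℝ) ≤ ℓ := by exact_mod_cast hℓ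
  have hjj : |(j : ℝ) - j'| ≤ ℓ - 1 := by
    rw [abs_sub_le_iff]
    constructor <;> linarith [(Nat.one_le_cast (α := ℝ)).2 hj1, (Nat.one_le_cast (α := ℝ)).2 hj1',
      (Nat.cast_le (α := ℝ)).2 hjℓ, (Nat.cast_le (α := ℝ)).2 hjℓ']
  linarith [dist_xpt_le (m := m) (by omega : i < m) (by omega : i' < m) j j']

noncomputable def separatingVector (m : ℕ) (L : ℕ → ℕ) : EuclideanSpace ℝ (Fin m) :=
  WithLp.toLp 2 fun c => if (c : ℕ) = m - 1 then 1 else -(L c : ℝ)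

theorem inner_separatingVector_xpt {m i : ℕ} (hi : i < m - 1) (L : ℕ → ℕ) (j : ℕ) :
    ⟪separatingVector m L, xpt m i j⟫_ℝ = j - L i := by
  rw [xpt_eq (by omega : i < m), inner_add_right, real_inner_smul_right,
    EuclideanSpace.inner_single_right, EuclideanSpace.inner_single_right]
  simp only [separatingVector, hi.ne, ↓reduceIte, Real.ringHom_apply, mul_neg, one_mul, mul_one]
  ring

theorem norm_separatingVector_le {m ℓ : ℕ} {L : ℕ → ℕ} (hℓ : 1 ≤ ℓ)
    (hL : ∀ i < m - 1, L i ≤ ℓ) : ‖separatingVector m L‖ ≤ ℓ * √m := by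
  refine (EuclideanSpace.norm_le_sqrt_card_mul _ (Nat.cast_nonneg ℓ) fun c => ?_).trans_eq
    (by rw [Fintype.card_fin, mul_comm])
  by_cases hc : (c : ℕ) = m - 1
  · simpa [separatingVector, hc] using hℓ
  · simpa [separatingVector, hc] using hL c (by omega)

theorem stmt11_general (m : ℕ) (γ : ℝ)
    (ℓ : ℕ) (hℓdef : ℓ = (⌊1 / Real.sqrt (2 * γ * Real.sqrt m)⌋).toNat)
    (L : ℕ → ℕ) (hL : ∀ i < m - 1, 1 ≤ L i ∧ L i ≤ ℓ) :
    ENNReal.ofReal (γ * Metric.diam {z : EuclideanSpace ℝ (Fin m) |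
        ∃ i j : ℕ, i < m - 1 ∧ 1 ≤ j ∧ j ≤ ℓ ∧ z = xpt m i j}) ≤
      ⨅ a ∈ convexHull ℝ {z : EuclideanSpace ℝ (Fin m) |
          ∃ i j : ℕ, i < m - 1 ∧ 1 ≤ j ∧ j ≤ L i ∧ z = xpt m i j},
        ⨅ b ∈ convexHull ℝ {z : EuclideanSpace ℝ (Fin m) |
          ∃ i j : ℕ, i < m - 1 ∧ L i < j ∧ j ≤ ℓ ∧ z = xpt m i j},
          ENNReal.ofReal (dist a b) := by
  refine le_iInf₂ fun a ha => le_iInf₂ fun b hb => ENNReal.ofReal_le_ofReal ?_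
  -- a point of `C₂` forces `ℓ ≥ 1` and `m ≥ 2`; for `C₂ = ∅` the infimum is `⊤`
  obtain ⟨_, i, j, hi, hLj, hjℓ, -⟩ := convexHull_nonempty_iff.1 ⟨b, hb⟩
  have hℓ : 1 ≤ ℓ := by omega
  have hm : 0 < m := by omega
  obtain ⟨ht, hℓt⟩ := sq_mul_le_one_of_le_one_div_sqrt (x := ℓ) (by positivity)
    (by rw [hℓdef, Int.floor_toNat]; exact Nat.floor_le (by positivity))
  have hγ : 0 ≤ γ := by nlinarith [Real.sqrt_nonneg (m : ℝ)]
  have hsep : 1 ≤ ‖separatingVector m L‖ * dist a b := by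
    refine le_norm_mul_dist_of_separated (c := 0) ?_ ?_ ha hb
    · rintro _ ⟨i, j, hi, -, hj, rfl⟩
      rw [inner_separatingVector_xpt hi]
      exact sub_nonpos.2 (by exact_mod_cast hj)
    · rintro _ ⟨i, j, hi, hj, -, rfl⟩
      rw [inner_separatingVector_xpt hi]
      have : (L i : ℝ) + 1 ≤ j := by exact_mod_cast hj
      linarith
  have hnorm := norm_separatingVector_le hℓ fun i hi => (hL i hi).2
  have key : γ * (2 * ℓ) * (ℓ * √m) ≤ dist a b * (ℓ * √m) :=
    calc _ = (ℓ : ℝ) ^ 2 * (2 * γ * √m) := by ring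
      _ ≤ ‖separatingVector m L‖ * dist a b := hℓt.trans hsep
      _ ≤ ℓ * √m * dist a b := by gcongr
      _ = _ := mul_comm _ _
  calc γ * Metric.diam _ ≤ γ * (2 * ℓ) := by gcongr; exact diam_xpt_le hℓ
    _ ≤ dist a b := le_of_mul_le_mul_right key (by positivity)

theorem stmt11 (m : ℕ) (hm : 2 ≤ m) (γ : ℝ) (hγ : 0 < γ)
    (hγle : γ ≤ (m : ℝ) ^ (-(3:ℝ)/2) / 16)
    (ℓ : ℕ) (hℓdef : ℓ = (⌊1 / Real.sqrt (2 * γ * Real.sqrt m)⌋).toNat)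
    (L : ℕ → ℕ) (hL : ∀ i < m - 1, 1 ≤ L i ∧ L i ≤ ℓ) :
    ENNReal.ofReal (γ * Metric.diam {z : EuclideanSpace ℝ (Fin m) |
        ∃ i j : ℕ, i < m - 1 ∧ 1 ≤ j ∧ j ≤ ℓ ∧ z = xpt m i j}) ≤
      ⨅ a ∈ convexHull ℝ {z : EuclideanSpace ℝ (Fin m) |
          ∃ i j : ℕ, i < m - 1 ∧ 1 ≤ j ∧ j ≤ L i ∧ z = xpt m i j},
        ⨅ b ∈ convexHull ℝ {z : EuclideanSpace ℝ (Fin m) |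
          ∃ i j : ℕ, i < m - 1 ∧ L i < j ∧ j ≤ ℓ ∧ z = xpt m i j},
          ENNReal.ofReal (dist a b) :=
  stmt11_general m γ ℓ hℓdef L hL
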